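/- Common knowledge cannot be attained by any finite protocol over an unreliable channel: in the Kripke-model formulation, if for every run r and every finite k there exists a run r' indistinguishable to one of the agents in which one fewer message was delivered, then no state in which common knowledge of message delivery holds is reachable. -/
import Mathlib


/-- "Everyone knows": both agents know `φ`. -/
def everyoneKnows {R : Type*} (eqA eqB : R → R → Prop) (φ : R → Prop) : R → Prop :=
  fun r => ∀ r', (eqA r r' ∨ eqB r r') → φ r'

/-- Common knowledge: every finite alternation/iterate of the knowledge
operators holds. -/
def commonKnowledge {R : Type*} (eqA eqB : R → R → Prop) (φ : R → Prop) (r : R) : Prop :=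
  ∀ n : ℕ, (everyoneKnows eqA eqB)^[n + 1] φ r

/-- Two Generals / Halpern–Moses: over an unreliable channel, if from every run
with at least one delivered message there is a run with one fewer delivered
message that is indistinguishable to one of the agents, then common knowledge
of "at least one message was delivered" holds at no run. -/
theorem no_common_knowledge_of_delivery {R : Type*}
    (eqA eqB : R → R → Prop) (hA : Equivalence eqA) (hB : Equivalence eqB)
    (delivered : R → ℕ)
    (hdrop : ∀ r, 1 ≤ delivered r →
      ∃ r', (eqA r r' ∨ eqB r r') ∧ delivered r' = delivered r - 1) :
    ∀ r, ¬ commonKnowledge eqA eqB (fun r' => 1 ≤ delivered r') r := by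
  intro r hck
  -- key lemma: EK^[n+1] φ r → n + 1 ≤ delivered r
  have key : ∀ n : ℕ, ∀ r : R,
      (everyoneKnows eqA eqB)^[n + 1] (fun r' => 1 ≤ delivered r') r →
      n + 1 ≤ delivered r := by
    intro n
    induction n with
    | zero =>
      intro r h
      simpa using h r (Or.inl (hA.refl r))
    | succ m ih =>
      intro r h
      rw [Function.iterate_succ_apply'] at h
      have hm : (everyoneKnows eqA eqB)^[m + 1] (fun r' => 1 ≤ delivered r') r :=
        h r (Or.inl (hA.refl r))
      have h1 : m + 1 ≤ delivered r := ih r hm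
      obtain ⟨r', heq, hd⟩ := hdrop r (le_trans (Nat.one_le_iff_ne_zero.mpr (by omega)) h1)
      have h2 : m + 1 ≤ delivered r' := ih r' (h r' heq)
      omega
  have := key (delivered r) r (hck (delivered r))
  omega
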